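/- Let e₁,…,e_k be square-integrable centered Gaussian random variables. Then the Gram determinant of the differences satisfies G(e₂−e₁, e₃−e₂, …, e_k−e_{k−1}) ≥ Var(e₂|e₁) · Var(e₃|e₁,e₂) ⋯ Var(e_k|e₁,…,e_{k−1}), where Var(e_j|e₁,…,e_{j−1}) denotes the squared distance in L² from e_j to the closed linear span of e₁,…,e_{j−1}, and G denotes the Gram determinant with respect to the L² inner product. -/

import Mathlib

/-!
Gram–Schmidt writes the successive differences `v i = e (i+1) - e i` as `v = g A` with `g`
orthogonal and `A` unipotent upper triangular, so `Gram(v) = Aᴴ Gram(g) A` and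
`det Gram(v) = ∏ ‖g i‖²`. Moreover `v i - g i` lies in the span of the earlier `v j`, hence
`e (i+1) - g i = e i + (v i - g i)` lies in the span of `e 0, …, e i`, and the distance from
`e (i+1)` to that span is at most `‖g i‖`.
-/

section

open Finset InnerProductSpace Matrix

variable {𝕜 E : Type*} [RCLike 𝕜] [NormedAddCommGroup E] [InnerProductSpace 𝕜 E]

theorem Matrix.gram_sum_smul {m n : Type*} [Fintype m] (A : Matrix m n 𝕜) (w : m → E) :
    gram 𝕜 (fun i => ∑ k, A k i • w k) = Aᴴ * gram 𝕜 w * A := by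
  ext i j
  simp only [gram_apply, sum_inner, inner_sum, inner_smul_left, inner_smul_right, mul_apply,
    conjTranspose_apply, sum_mul, mul_sum, RCLike.star_def]
  exact sum_congr rfl fun _ _ => sum_congr rfl fun _ _ => by ring

theorem Matrix.gram_eq_diagonal_of_orthogonal {ι : Type*} [DecidableEq ι] {w : ι → E}
    (hw : Pairwise fun i j => ⟪w i, w j⟫_𝕜 = 0) :
    gram 𝕜 w = diagonal fun i => (‖w i‖ : 𝕜) ^ 2 := by
  ext i j
  rcases eq_or_ne i j with rfl | hij
  · simp [gram_apply, inner_self_eq_norm_sq_to_K]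
  · simp [gram_apply, hw hij, hij]

namespace InnerProductSpace

variable (𝕜) {ι : Type*} [LinearOrder ι] [LocallyFiniteOrderBot ι] [WellFoundedLT ι]

/-- Column `i` holds the coefficients of `v i` in the Gram–Schmidt family; the diagonal is set
to `1` because `⟪g i, v i⟫ / ‖g i‖ ^ 2` is `0 / 0` when `g i = 0`. -/
noncomputable def gramSchmidtCoeff [DecidableEq ι] (v : ι → E) : Matrix ι ι 𝕜 :=
  of fun k i =>
    if k = i then 1 else ⟪gramSchmidt 𝕜 v k, v i⟫_𝕜 / (‖gramSchmidt 𝕜 v k‖ : 𝕜) ^ 2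

theorem sub_gramSchmidt_mem_span (v : ι → E) (i : ι) :
    v i - gramSchmidt 𝕜 v i ∈ Submodule.span 𝕜 (v '' Set.Iio i) := by
  rw [gramSchmidt_def 𝕜 v i, sub_sub_cancel, ← span_gramSchmidt_Iio]
  refine Submodule.sum_mem _ fun k hk => ?_
  have hk' : gramSchmidt 𝕜 v k ∈ gramSchmidt 𝕜 v '' Set.Iio i :=
    Set.mem_image_of_mem _ (mem_Iio.mp hk)
  exact Submodule.span_mono (Set.singleton_subset_iff.mpr hk')
    (Submodule.starProjection_apply_mem _ _)

variable [DecidableEq ι]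

theorem gramSchmidtCoeff_isUpperTriangular (v : ι → E) :
    (gramSchmidtCoeff 𝕜 v).IsUpperTriangular := fun k i (hik : i < k) => by
  simp only [gramSchmidtCoeff, of_apply, if_neg hik.ne', gramSchmidt_inv_triangular 𝕜 v hik,
    zero_div]

theorem det_gramSchmidtCoeff [Fintype ι] (v : ι → E) : (gramSchmidtCoeff 𝕜 v).det = 1 := by
  rw [det_of_isUpperTriangular (gramSchmidtCoeff_isUpperTriangular 𝕜 v)]
  simp [gramSchmidtCoeff]

theorem sum_gramSchmidtCoeff_smul [Fintype ι] (v : ι → E) (i : ι) :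
    ∑ k, gramSchmidtCoeff 𝕜 v k i • gramSchmidt 𝕜 v k = v i := by
  have hsupp : ∀ k ∉ Iic i, gramSchmidtCoeff 𝕜 v k i • gramSchmidt 𝕜 v k = 0 :=
    fun k hk => by
      rw [gramSchmidtCoeff_isUpperTriangular 𝕜 v (not_le.mp (mem_Iic.not.mp hk)), zero_smul]
  rw [← sum_subset (subset_univ _) fun k _ hk => hsupp k hk, ← Iio_insert,
    sum_insert notMem_Iio_self, gramSchmidt_def'' 𝕜 v i]
  simp only [gramSchmidtCoeff, of_apply, ↓reduceIte, one_smul]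
  exact congrArg _ (sum_congr rfl fun k hk => by rw [if_neg (mem_Iio.mp hk).ne])

theorem det_gram_eq_prod_norm_gramSchmidt_sq [Fintype ι] (v : ι → E) :
    (gram 𝕜 v).det = ∏ i, (‖gramSchmidt 𝕜 v i‖ : 𝕜) ^ 2 := by
  conv_lhs => rw [← funext (sum_gramSchmidtCoeff_smul 𝕜 v)]
  rw [gram_sum_smul, gram_eq_diagonal_of_orthogonal (gramSchmidt_pairwise_orthogonal 𝕜 v),
    det_mul, det_mul, det_conjTranspose, det_gramSchmidtCoeff, det_diagonal, star_one, one_mul,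
    mul_one]

end InnerProductSpace

variable (𝕜) {n : ℕ} (e : Fin (n + 1) → E)

theorem span_image_Iio_succ_sub_castSucc_le (i : Fin n) :
    Submodule.span 𝕜 ((fun j : Fin n => e j.succ - e j.castSucc) '' Set.Iio i) ≤
      Submodule.span 𝕜 (e '' Set.Iic i.castSucc) := by
  refine Submodule.span_le.mpr ?_
  rintro _ ⟨j, hji : j < i, rfl⟩
  exact sub_mem (Submodule.subset_span ⟨j.succ, Fin.succ_le_castSucc_iff.mpr hji, rfl⟩)
    (Submodule.subset_span ⟨j.castSucc, Fin.castSucc_le_castSucc_iff.mpr hji.le, rfl⟩)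

theorem infDist_le_norm_gramSchmidt_succ_sub_castSucc (i : Fin n) :
    Metric.infDist (e i.succ) (Submodule.span 𝕜 (e '' Set.Iic i.castSucc)) ≤
      ‖gramSchmidt 𝕜 (fun j : Fin n => e j.succ - e j.castSucc) i‖ := by
  set v : Fin n → E := fun j => e j.succ - e j.castSucc
  set w := e i.castSucc + (v i - gramSchmidt 𝕜 v i)
  have hw : w ∈ Submodule.span 𝕜 (e '' Set.Iic i.castSucc) :=
    add_mem (Submodule.subset_span ⟨i.castSucc, Set.mem_Iic.mpr le_rfl, rfl⟩)
      (span_image_Iio_succ_sub_castSucc_le 𝕜 e i (sub_gramSchmidt_mem_span 𝕜 v i))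
  calc Metric.infDist (e i.succ) _ ≤ dist (e i.succ) w := Metric.infDist_le_dist_of_mem hw
    _ = ‖gramSchmidt 𝕜 v i‖ := by rw [dist_eq_norm]; congr 1; simp only [w, v]; abel

end

theorem stmt_1_general {H : Type*} [NormedAddCommGroup H] [InnerProductSpace ℝ H]
    (n : ℕ) (e : Fin (n + 1) → H) :
    Matrix.det (Matrix.of fun i j : Fin n =>
        (inner ℝ (e i.succ - e i.castSucc) (e j.succ - e j.castSucc) : ℝ)) ≥
      ∏ i : Fin n,
        (Metric.infDist (e i.succ)
          (↑(Submodule.span ℝ (e '' {j : Fin (n + 1) | j ≤ i.castSucc})))) ^ 2 := by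
  set v : Fin n → H := fun j => e j.succ - e j.castSucc
  have hgram : (Matrix.gram ℝ v).det = ∏ i, ‖InnerProductSpace.gramSchmidt ℝ v i‖ ^ 2 := by
    simpa using InnerProductSpace.det_gram_eq_prod_norm_gramSchmidt_sq ℝ v
  rw [ge_iff_le, ← Matrix.gram, hgram]
  exact Finset.prod_le_prod (fun i _ => by positivity) fun i _ => pow_le_pow_left₀
    Metric.infDist_nonneg (infDist_le_norm_gramSchmidt_succ_sub_castSucc ℝ e i) 2

/-- **Gram determinant lower bound (Lemma 2.2).** For vectors `e 0, …, e n` of a real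
Hilbert space (e.g. square integrable centered Gaussian random variables in `L²(Ω)`),
the Gram determinant of the successive differences dominates the product of the
conditional variances, i.e. the squared distances of `e (i+1)` to the span of
`e 0, …, e i`. -/
theorem stmt_1 {H : Type*} [NormedAddCommGroup H] [InnerProductSpace ℝ H] [CompleteSpace H]
    (n : ℕ) (e : Fin (n + 1) → H) :
    Matrix.det (Matrix.of fun i j : Fin n =>
        (inner ℝ (e i.succ - e i.castSucc) (e j.succ - e j.castSucc) : ℝ)) ≥
      ∏ i : Fin n,
        (Metric.infDist (e i.succ)
          (↑(Submodule.span ℝ (e '' {j : Fin (n + 1) | j ≤ i.castSucc})))) ^ 2 :=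
  stmt_1_general n e
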